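/- arXiv:1506.07703 — 2 statements merged into one kernel-verified Lean document; each statement's English description precedes it below -/
import Mathlib

section
/- Let R be a domestic string algebra, let b = α⋯β^{-1} be a band and let c = d⋯e be a cyclic permutation of a band not equivalent to b. Then b cannot overlap c in any string: there is no string of the form u = α x d y β^{-1} z e with b = α x d y β^{-1} and c = d y β^{-1} z e. -/
/-!
Combinatorics of strings and bands over a string algebra, presented abstractly:
a string algebra `KQ/I` is recorded by its quiver (vertices, arrows with source and
target) together with the relation `comp b a`, meaning that the length-two path
"`a` followed by `b`" does not lie in the monomial ideal `I`.  The defining conditions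
of a string algebra are recorded as fields.
-/

/-- Combinatorial data of a string algebra. -/
structure StringData where
  /-- vertices -/
  V : Type
  /-- arrows -/
  A : Type
  /-- source of an arrow -/
  s : A → V
  /-- target of an arrow -/
  t : A → V
  /-- `comp b a` : the composite path "`a` then `b`" avoids the monomial relations -/
  comp : A → A → Prop
  comp_st : ∀ a b : A, comp b a → s b = t a
  /-- every vertex has at most two incoming arrows -/
  two_in : ∀ (v : V) (a b c : A), t a = v → t b = v → t c = v → a = b ∨ a = c ∨ b = c
  /-- every vertex has at most two outgoing arrows -/
  two_out : ∀ (v : V) (a b c : A), s a = v → s b = v → s c = v → a = b ∨ a = c ∨ b = c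
  /-- for every arrow there is at most one arrow that may follow it -/
  uniq_left : ∀ a b b' : A, comp b a → comp b' a → b = b'
  /-- for every arrow there is at most one arrow that it may follow -/
  uniq_right : ∀ a g g' : A, comp a g → comp a g' → g = g'

namespace StringData

variable (D : StringData)

/-- A letter is a direct arrow (`Sum.inl`) or an inverse arrow (`Sum.inr`). -/
abbrev Letter := D.A ⊕ D.A

/-- `Adj l l'` : the letter `l` may be immediately followed (to the right, reading a
string from left to right) by the letter `l'`, avoiding relations and immediate
backtracks. -/
def Adj : D.Letter → D.Letter → Prop
  | Sum.inl a, Sum.inl a' => D.comp a a'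
  | Sum.inl a, Sum.inr b => a ≠ b ∧ D.s a = D.s b
  | Sum.inr b, Sum.inl a => b ≠ a ∧ D.t b = D.t a
  | Sum.inr b, Sum.inr b' => D.comp b' b

/-- A string: a nonempty reduced walk avoiding the relations. -/
def IsString (w : List D.Letter) : Prop :=
  w ≠ [] ∧ w.Chain' D.Adj

/-- The `k`-th power of a word. -/
def wpow {X : Type*} (w : List X) (k : ℕ) : List X :=
  (List.replicate k w).flatten

/-- The formal inverse of a letter. -/
def linv : D.Letter → D.Letter := Sum.elim Sum.inr Sum.inl

/-- The formal inverse of a word. -/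
def winv (w : List D.Letter) : List D.Letter := (w.map D.linv).reverse

/-- `IsRotation u v` : `v` is a cyclic permutation (rotation) of `u`. -/
def IsRotation {X : Type*} (u v : List X) : Prop :=
  ∃ p q : List X, u = p ++ q ∧ v = q ++ p

/-- A band: a string of the form `α ⋯ β⁻¹` (starting with a direct letter and ending
with an inverse letter), which closes up cyclically (so that all of its rotations are
strings) and which is primitive, i.e. not a proper power. -/
def IsBand (w : List D.Letter) : Prop :=
  D.IsString w ∧
  (∃ (a : D.A) (x : List D.Letter) (b : D.A), w = Sum.inl a :: (x ++ [Sum.inr b])) ∧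
  (∃ l l' : D.Letter, w.getLast? = some l ∧ w.head? = some l' ∧ D.Adj l l') ∧
  (∀ (v : List D.Letter) (k : ℕ), w = wpow v k → k = 1)

/-- A string algebra is domestic when it has only finitely many bands. -/
def Domestic : Prop := {w : List D.Letter | D.IsBand w}.Finite

end StringData

/-!
Write `b = p o` and `c = o q`. Since `c` is a rotation of a band, `w = q o` is a primitive word
which closes up cyclically, and since `b` also ends with `o`, every word `b w^(n+1)` is a cyclic
string running from `α` to `β⁻¹`; its primitive root is therefore a band. By domesticity two of
these roots coincide: `b w^m = v^k` and `b w^m' = v^k'` with `m < m'`. Then `w^(m'-m) = v^(k'-k)`,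
so `v = w` by uniqueness of primitive roots, and `b = w^(k-m) = w` since `b` is primitive. Thus
`b = q o` is a rotation of `c`, hence of `b₂`.
-/

namespace StringData

open List

section Words

variable {X : Type*}

theorem wpow_zero (w : List X) : wpow w 0 = [] := rfl

theorem wpow_succ (w : List X) (k : ℕ) : wpow w (k + 1) = w ++ wpow w k := by
  simp [wpow, replicate_succ]

theorem wpow_one (w : List X) : wpow w 1 = w := by simp [wpow]

theorem wpow_add (w : List X) (a b : ℕ) : wpow w (a + b) = wpow w a ++ wpow w b := by
  rw [wpow, wpow, wpow, replicate_add, flatten_append]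

theorem wpow_succ' (w : List X) (k : ℕ) : wpow w (k + 1) = wpow w k ++ w := by
  rw [wpow_add, wpow_one]

theorem wpow_mul (w : List X) (a b : ℕ) : wpow w (a * b) = wpow (wpow w a) b := by
  induction b with
  | zero => rfl
  | succ b ih => rw [Nat.mul_succ, wpow_add, ih, wpow_succ']

theorem length_wpow (w : List X) (k : ℕ) : (wpow w k).length = k * w.length := by
  simp [wpow]

theorem nil_wpow (k : ℕ) : wpow ([] : List X) k = [] := flatten_replicate_nil

theorem head?_wpow {k : ℕ} (hk : k ≠ 0) (w : List X) : (wpow w k).head? = w.head? :=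
  head?_flatten_replicate hk w

theorem getLast?_wpow {k : ℕ} (hk : k ≠ 0) (w : List X) : (wpow w k).getLast? = w.getLast? :=
  getLast?_flatten_replicate hk w

theorem prefix_wpow {k : ℕ} (hk : k ≠ 0) (w : List X) : w <+: wpow w k := by
  obtain ⟨k, rfl⟩ := Nat.exists_eq_succ_of_ne_zero hk
  rw [wpow_succ]
  exact prefix_append _ _

theorem append_wpow_comm (w : List X) (k : ℕ) : w ++ wpow w k = wpow w k ++ w := by
  rw [← wpow_succ, wpow_succ']

theorem wpow_append_append (x y : List X) (m : ℕ) :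
    wpow (x ++ y) m ++ x = x ++ wpow (y ++ x) m := by
  induction m with
  | zero => simp [wpow_zero]
  | succ m ih => simp only [wpow_succ, append_assoc, ih]

theorem eq_of_wpow_eq_of_length_eq {u v : List X} {k : ℕ} (hk : k ≠ 0)
    (hlen : u.length = v.length) (h : wpow u k = wpow v k) : u = v := by
  obtain ⟨k, rfl⟩ := Nat.exists_eq_succ_of_ne_zero hk
  rw [wpow_succ, wpow_succ] at h
  exact (append_inj h hlen).1

theorem wpow_rotate_one (t : List X) (m : ℕ) : (wpow t m).rotate 1 = wpow (t.rotate 1) m := by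
  rcases t with _ | ⟨x, t⟩
  · simp [nil_wpow]
  rcases m with _ | m
  · rfl
  simpa [wpow_succ, rotate_cons_succ] using congrArg (t ++ ·) (wpow_append_append [x] t m)

theorem wpow_rotate (t : List X) (m n : ℕ) : (wpow t m).rotate n = wpow (t.rotate n) m := by
  induction n with
  | zero => simp
  | succ n ih => rw [← rotate_rotate, ih, wpow_rotate_one, rotate_rotate]

theorem isRotation_iff_isRotated {u v : List X} : IsRotation u v ↔ u ~r v := by
  constructor
  · rintro ⟨p, q, rfl, rfl⟩
    exact ⟨p.length, rotate_append_length_eq p q⟩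
  · rintro ⟨n, rfl⟩
    exact ⟨_, _, (take_append_drop (n % u.length) u).symm, rotate_eq_drop_append_take_mod⟩

def IsPrimitive (w : List X) : Prop := ∀ v k, w = wpow v k → k = 1

theorem IsPrimitive.ne_nil {w : List X} (hw : IsPrimitive w) : w ≠ [] := by
  rintro rfl
  exact absurd (hw [] 0 rfl) zero_ne_one

theorem IsPrimitive.append_comm {p q : List X} (h : IsPrimitive (p ++ q)) :
    IsPrimitive (q ++ p) := by
  intro t m hqp
  apply h (t.rotate q.length) m
  rw [← wpow_rotate, ← hqp, rotate_append_length_eq]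

theorem exists_isPrimitive_wpow_eq {w : List X} (hw : w ≠ []) :
    ∃ v k, IsPrimitive v ∧ w = wpow v k := by
  induction hn : w.length using Nat.strong_induction_on generalizing w with
  | _ n ih =>
  by_cases hp : IsPrimitive w
  · exact ⟨w, 1, hp, (wpow_one w).symm⟩
  obtain ⟨t, m, rfl, hm⟩ : ∃ t m, w = wpow t m ∧ m ≠ 1 := by simpa [IsPrimitive] using hp
  have ht : t ≠ [] := by rintro rfl; exact hw (nil_wpow m)
  have hm0 : m ≠ 0 := by rintro rfl; exact hw (wpow_zero t)
  have hlt : t.length < n := by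
    rw [← hn, length_wpow]
    have := length_pos_iff.mpr ht
    have : 2 ≤ m := by omega
    nlinarith
  obtain ⟨v, k, hv, rfl⟩ := ih t.length hlt ht rfl
  exact ⟨v, k * m, hv, (wpow_mul v k m).symm⟩

theorem exists_wpow_eq_of_append_comm {x y : List X} (h : x ++ y = y ++ x) :
    ∃ z α β, x = wpow z α ∧ y = wpow z β := by
  induction hn : x.length + y.length using Nat.strong_induction_on generalizing x y with
  | _ n ih =>
  wlog hle : x.length ≤ y.length generalizing x y
  · obtain ⟨z, α, β, hx, hy⟩ := this h.symm (by omega) (by omega)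
    exact ⟨z, β, α, hy, hx⟩
  rcases eq_or_ne x [] with rfl | hx
  · exact ⟨y, 0, 1, rfl, (wpow_one y).symm⟩
  obtain ⟨t, rfl⟩ : x <+: y :=
    prefix_of_prefix_length_le (h ▸ prefix_append x y) (prefix_append y x) hle
  have hxt : x ++ t = t ++ x := by simpa using h
  have hlt : x.length + t.length < n := by
    have := length_pos_iff.mpr hx
    simp only [← hn, length_append]
    omega
  obtain ⟨z, α, β, rfl, rfl⟩ := ih _ hlt hxt rfl
  exact ⟨z, α, α + β, rfl, (wpow_add z α β).symm⟩

theorem IsPrimitive.eq_of_append_comm {x y : List X} (hx : IsPrimitive x) (hy : IsPrimitive y)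
    (h : x ++ y = y ++ x) : x = y := by
  obtain ⟨z, α, β, rfl, rfl⟩ := exists_wpow_eq_of_append_comm h
  rw [hx z α rfl, hy z β rfl]

theorem append_comm_of_wpow_eq {x y : List X} {i j : ℕ} (hi : i ≠ 0) (hj : j ≠ 0)
    (h : wpow x i = wpow y j) : x ++ y = y ++ x := by
  wlog hle : x.length ≤ y.length generalizing x y i j
  · exact (this hj hi h.symm (by omega)).symm
  obtain ⟨t, rfl⟩ : x <+: y :=
    prefix_of_prefix_length_le (h ▸ prefix_wpow hi x) (prefix_wpow hj _) hle
  have hpow : wpow (x ++ t) j = wpow (t ++ x) j := by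
    rw [← h]
    apply append_cancel_left (as := x)
    rw [append_wpow_comm, h, wpow_append_append]
  have hxt : x ++ t = t ++ x :=
    eq_of_wpow_eq_of_length_eq hj (by simp [Nat.add_comm]) hpow
  rw [append_assoc, ← hxt]

theorem IsPrimitive.eq_of_wpow_eq {x y : List X} {i j : ℕ} (hx : IsPrimitive x)
    (hy : IsPrimitive y) (hi : i ≠ 0) (hj : j ≠ 0) (h : wpow x i = wpow y j) : x = y :=
  hx.eq_of_append_comm hy (append_comm_of_wpow_eq hi hj h)

theorem eq_of_append_wpow_eq_wpow {b w v : List X} {m m' k k' : ℕ} (hb : IsPrimitive b)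
    (hw : IsPrimitive w) (hv : IsPrimitive v) (h : b ++ wpow w m = wpow v k)
    (h' : b ++ wpow w m' = wpow v k') (hm : m < m') : b = w := by
  have hwlen := length_pos_iff.mpr hw.ne_nil
  have hk : k < k' := by
    have hlen := congrArg length h
    have hlen' := congrArg length h'
    simp only [length_append, length_wpow] at hlen hlen'
    have : m * w.length < m' * w.length := Nat.mul_lt_mul_of_pos_right hm hwlen
    exact Nat.lt_of_mul_lt_mul_right (a := v.length) (by omega)
  have hwv : wpow w (m' - m) = wpow v (k' - k) := by
    apply append_cancel_left (as := wpow v k)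
    calc wpow v k ++ wpow w (m' - m) = b ++ wpow w m' := by
          rw [← h, append_assoc, ← wpow_add, Nat.add_sub_cancel' hm.le]
      _ = wpow v k ++ wpow v (k' - k) := by rw [h', ← wpow_add, Nat.add_sub_cancel' hk.le]
  obtain rfl := hv.eq_of_wpow_eq hw (by omega) (by omega) hwv.symm
  have hmk : m ≤ k := by
    have hlen := congrArg length h
    simp only [length_append, length_wpow] at hlen
    exact Nat.le_of_mul_le_mul_right (by omega) hwlen
  have hbk : b = wpow v (k - m) := by
    apply append_cancel_right (bs := wpow v m)
    rw [h, ← wpow_add, Nat.sub_add_cancel hmk]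
  rw [hbk, hb _ _ hbk, wpow_one]

def IsCyclicChain (R : X → X → Prop) (w : List X) : Prop :=
  w.IsChain R ∧ ∀ x ∈ w.getLast?, ∀ y ∈ w.head?, R x y

theorem IsCyclicChain.append_comm {R : X → X → Prop} {p q : List X}
    (h : IsCyclicChain R (p ++ q)) : IsCyclicChain R (q ++ p) := by
  rcases eq_or_ne p [] with rfl | hp
  · simpa using h
  rcases eq_or_ne q [] with rfl | hq
  · simpa using h
  obtain ⟨hpq, hclose⟩ := h
  obtain ⟨hp', hq', hseam⟩ := isChain_append.mp hpq
  rw [getLast?_append_of_ne_nil _ hq, head?_append_of_ne_nil _ hp] at hclose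
  refine ⟨hq'.append hp' hclose, ?_⟩
  rwa [getLast?_append_of_ne_nil _ hp, head?_append_of_ne_nil _ hq]

theorem IsCyclicChain.isChain_wpow {R : X → X → Prop} {w : List X} (h : IsCyclicChain R w)
    (k : ℕ) : (wpow w k).IsChain R := by
  induction k with
  | zero => exact isChain_nil
  | succ k ih =>
    rw [wpow_succ]
    refine h.1.append ih fun x hx y hy => ?_
    rcases eq_or_ne k 0 with rfl | hk
    · simp [wpow_zero] at hy
    · exact h.2 x hx y (head?_wpow hk w ▸ hy)

end Words

variable {D : StringData}

theorem IsBand.ne_nil {b : List D.Letter} (hb : D.IsBand b) : b ≠ [] := hb.1.1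

theorem IsBand.isPrimitive {b : List D.Letter} (hb : D.IsBand b) : IsPrimitive b := hb.2.2.2

theorem IsBand.isCyclicChain {b : List D.Letter} (hb : D.IsBand b) : IsCyclicChain D.Adj b := by
  obtain ⟨⟨-, hchain⟩, -, ⟨l, l', hl, hl', hadj⟩, -⟩ := hb
  refine ⟨hchain, fun x hx y hy => ?_⟩
  rw [Option.mem_def, hl, Option.some_inj] at hx
  rw [Option.mem_def, hl', Option.some_inj] at hy
  exact hx ▸ hy ▸ hadj

theorem isBand_of_eq_wpow {b u v : List D.Letter} {k : ℕ} (hb : D.IsBand b)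
    (hu : u.IsChain D.Adj) (hh : u.head? = b.head?) (hl : u.getLast? = b.getLast?)
    (hv : IsPrimitive v) (huv : u = wpow v k) : D.IsBand v := by
  have hk : k ≠ 0 := by
    rintro rfl
    rw [huv, wpow_zero, head?_nil] at hh
    exact hb.ne_nil (head?_eq_none_iff.mp hh.symm)
  rw [huv, head?_wpow hk] at hh
  rw [huv, getLast?_wpow hk] at hl
  obtain ⟨-, ⟨a, x, β, rfl⟩, ⟨l, l', hl', hh', hadj⟩, -⟩ := hb
  refine ⟨⟨hv.ne_nil, (huv ▸ hu).prefix (prefix_wpow hk v)⟩, ?_,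
    ⟨l, l', hl.trans hl', hh.trans hh', hadj⟩, hv⟩
  obtain ⟨ys, rfl⟩ := getLast?_eq_some_iff.mp
    (by rw [hl, ← cons_append, getLast?_concat] : v.getLast? = some (Sum.inr β))
  rcases ys with _ | ⟨y, ys⟩
  · simp at hh
  · simp only [cons_append, head?_cons, Option.some_inj] at hh
    exact ⟨a, ys, β, by rw [hh]; rfl⟩

theorem Domestic.eq_of_isBand_append_wpow (hdom : D.Domestic) {b w : List D.Letter}
    (hb : D.IsBand b) (hw : IsCyclicChain D.Adj w) (hwp : IsPrimitive w)
    (hseam : ∀ x ∈ b.getLast?, ∀ y ∈ w.head?, D.Adj x y) (hlast : w.getLast? = b.getLast?) :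
    b = w := by
  have hroot (n : ℕ) : ∃ v k, IsPrimitive v ∧ b ++ wpow w (n + 1) = wpow v k :=
    exists_isPrimitive_wpow_eq (append_ne_nil_of_left_ne_nil hb.ne_nil _)
  choose v k hv hvk using hroot
  have hband (n : ℕ) : D.IsBand (v n) := by
    have hpow_ne : wpow w (n + 1) ≠ [] := by
      rw [wpow_succ]; exact append_ne_nil_of_left_ne_nil hwp.ne_nil _
    refine isBand_of_eq_wpow hb ?_ (head?_append_of_ne_nil _ hb.ne_nil) ?_ (hv n) (hvk n)
    · exact hb.isCyclicChain.1.append (hw.isChain_wpow _) (by rwa [head?_wpow n.succ_ne_zero])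
    · rw [getLast?_append_of_ne_nil _ hpow_ne, getLast?_wpow n.succ_ne_zero, hlast]
  obtain ⟨n, n', hlt, heq⟩ := hdom.exists_lt_map_eq_of_forall_mem hband
  exact eq_of_append_wpow_eq_wpow hb.isPrimitive hwp (hv n) (hvk n) (heq ▸ hvk n')
    (Nat.succ_lt_succ hlt)

end StringData

open StringData in
/-- Let `R` be a domestic string algebra, `b` a band and `c` a cyclic permutation of a
band `b₂` which is not equivalent to `b` (i.e. not a cyclic permutation of `b` or of
`b⁻¹`).  Then `b` cannot overlap `c` in any string: there is no string of the form
`u = b ++ q = p ++ c` in which the occurrences of `b` (as a prefix) and of `c` (as a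
suffix) overlap. -/
theorem band_not_overlap_other_band (D : StringData) (hdom : D.Domestic)
    (b b₂ c : List D.Letter) (hb : D.IsBand b) (hb₂ : D.IsBand b₂)
    (hc : IsRotation b₂ c)
    (hne : ¬ (IsRotation b b₂ ∨ IsRotation (D.winv b) b₂)) :
    ¬ ∃ p q : List D.Letter, p ≠ [] ∧ q ≠ [] ∧ p.length < b.length ∧
        b ++ q = p ++ c ∧ D.IsString (b ++ q) := by
  rintro ⟨p, q, -, hq, hlen, heq, -⟩
  obtain ⟨o, rfl, rfl⟩ : ∃ o, b = p ++ o ∧ c = o ++ q := by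
    rcases List.append_eq_append_iff.mp heq with ⟨o, rfl, -⟩ | h
    · simp at hlen
    · exact h
  have ho : o ≠ [] := by rintro rfl; simp at hlen
  obtain ⟨p₂, q₂, rfl, hc⟩ := hc
  have hoq : IsCyclicChain D.Adj (o ++ q) := hc ▸ hb₂.isCyclicChain.append_comm
  have hqo : IsPrimitive (q ++ o) := (hc ▸ hb₂.isPrimitive.append_comm).append_comm
  have hseam : ∀ x ∈ (p ++ o).getLast?, ∀ y ∈ (q ++ o).head?, D.Adj x y := by
    rw [List.getLast?_append_of_ne_nil _ ho, List.head?_append_of_ne_nil _ hq]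
    exact (List.isChain_append.mp hoq.1).2.2
  have hlast : (q ++ o).getLast? = (p ++ o).getLast? := by
    rw [List.getLast?_append_of_ne_nil _ ho, List.getLast?_append_of_ne_nil _ ho]
  have hbw : p ++ o = q ++ o := hdom.eq_of_isBand_append_wpow hb hoq.append_comm hqo hseam hlast
  refine hne (Or.inl (isRotation_iff_isRotated.mpr ?_))
  rw [hbw]
  exact (isRotation_iff_isRotated.mp ⟨q, o, rfl, hc.symm⟩).trans
    (isRotation_iff_isRotated.mp ⟨q₂, p₂, rfl, rfl⟩)
end

section
/- In the poset Ĥ of finite and 1-sided infinite strings over the Kronecker algebra that begin with α (ordered by the standard string order: c < d if d = cαd', or c = dβ^{-1}c', or c = eγ^{-1}c' and d = eδd'), the chain H of finite such strings has order type ω + ω*: the strings (αβ^{-1})^n, n ≥ 0 form the ascending ω-part, the strings (αβ^{-1})^mα form the descending ω*-part above them, and the infinite string (αβ^{-1})^∞ sits between the two parts; hence H has m-dimension 1 and the string (αβ^{-1})^∞ has m-dimension 1. -/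
/-! m-dimension machinery for preordered sets. -/

section MDim

variable {P : Type*} [Preorder P]

/-- `[x, y]` has finite length modulo `r`: there is a uniform bound on the lengths of
strictly increasing chains inside `[x, y]` no two consecutive members of which are
identified by `r`. -/
def FinLenBetween (r : P → P → Prop) (x y : P) : Prop :=
  ∃ n : ℕ, ∀ (m : ℕ) (f : Fin (m + 1) → P), StrictMono f →
    (∀ i, x ≤ f i ∧ f i ≤ y) →
    (∀ i : Fin m, ¬ r (f i.castSucc) (f i.succ)) → m ≤ n

/-- The transfinite sequence of congruences defining m-dimension. -/
noncomputable def mdimCong (P : Type*) [Preorder P] (o : Ordinal) : P → P → Prop :=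
  Ordinal.limitRecOn (motive := fun _ => P → P → Prop) o
    (fun x y => x = y)
    (fun _ ih => Relation.EqvGen
      (fun x y => ih x y ∨ (x ≤ y ∧ FinLenBetween ih x y) ∨ (y ≤ x ∧ FinLenBetween ih y x)))
    (fun o _ ih x y => ∃ (o' : Ordinal) (h : o' < o), ih o' h x y)

/-- `MDimIs P d` : the m-dimension of the ordered set `P` is `d`. -/
def MDimIs (P : Type*) [Preorder P] (d : Ordinal) : Prop :=
  (∀ x y : P, mdimCong P (d + 1) x y) ∧ (d = 0 ∨ ¬ ∀ x y : P, mdimCong P d x y)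

end MDim

/-! Strings over the Kronecker algebra.  The two arrows are indexed by `Fin 2`
(`0` is `α`, `1` is `β`); a letter is a direct arrow `Sum.inl i` or an inverse arrow
`Sum.inr i`.  Both arrows run between the same two vertices, so a word is a string
exactly when direct and inverse letters alternate with distinct arrow indices at each
step. -/

/-- Letters over the Kronecker quiver. -/
abbrev KLetter := Fin 2 ⊕ Fin 2

/-- Adjacency of letters in a Kronecker string (no compositions of arrows exist, so
only direct/inverse alternations with no backtracking are allowed). -/
def KAdj : KLetter → KLetter → Prop
  | Sum.inl a, Sum.inr b => a ≠ b
  | Sum.inr b, Sum.inl a => b ≠ a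
  | _, _ => False

/-- Finite strings over the Kronecker algebra (the empty word is the trivial
string `1`). -/
def KIsString (w : List KLetter) : Prop := w.Chain' KAdj

/-- The set `H` of finite strings which are empty or begin with the direct arrow `α`. -/
def KH : Set (List KLetter) :=
  {w | KIsString w ∧ (w = [] ∨ w.head? = some (Sum.inl 0))}

/-- The standard strict ordering of strings (in one direction class): `c < d` if
`d = c α d'`, or `c = d β⁻¹ c'`, or `c = e γ⁻¹ c'` and `d = e δ d'`. -/
def KltH (c d : List KLetter) : Prop :=
  (∃ (a : Fin 2) (d' : List KLetter), d = c ++ Sum.inl a :: d') ∨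
  (∃ (b : Fin 2) (c' : List KLetter), c = d ++ Sum.inr b :: c') ∨
  (∃ (e : List KLetter) (b a : Fin 2) (c' d' : List KLetter),
    c = e ++ Sum.inr b :: c' ∧ d = e ++ Sum.inl a :: d')

/-- The extension of the string ordering comparing a finite string `c` with a 1-sided
infinite string `u`:  `c < u`. -/
def KltFI (c : List KLetter) (u : ℕ → KLetter) : Prop :=
  ((∀ i (h : i < c.length), c.get ⟨i, h⟩ = u i) ∧ ∃ a : Fin 2, u c.length = Sum.inl a) ∨
  (∃ j, ∃ h : j < c.length,
    (∀ i (hi : i < j), c.get ⟨i, lt_trans hi h⟩ = u i) ∧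
    (∃ b : Fin 2, c.get ⟨j, h⟩ = Sum.inr b) ∧ (∃ a : Fin 2, u j = Sum.inl a))

/-- The extension of the string ordering comparing a 1-sided infinite string `u` with a
finite string `c`:  `u < c`. -/
def KltIF (u : ℕ → KLetter) (c : List KLetter) : Prop :=
  ((∀ i (h : i < c.length), c.get ⟨i, h⟩ = u i) ∧ ∃ b : Fin 2, u c.length = Sum.inr b) ∨
  (∃ j, ∃ h : j < c.length,
    (∀ i (hi : i < j), c.get ⟨i, lt_trans hi h⟩ = u i) ∧
    (∃ a : Fin 2, c.get ⟨j, h⟩ = Sum.inl a) ∧ (∃ b : Fin 2, u j = Sum.inr b))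

/-- The finite string `(αβ⁻¹)ⁿ`. -/
def kpow (n : ℕ) : List KLetter :=
  (List.replicate n ([Sum.inl 0, Sum.inr 1] : List KLetter)).flatten

/-- The finite string `(αβ⁻¹)ⁿα`. -/
def kpowa (n : ℕ) : List KLetter := kpow n ++ [Sum.inl 0]

/-- The 1-sided infinite string `(αβ⁻¹)^∞`. -/
def kInf : ℕ → KLetter := fun n => if n % 2 = 0 then Sum.inl 0 else Sum.inr 1

/-- The chain `H`, as a type. -/
def KHo : Type := ↥KH

/-- The underlying string of an element of the chain `H`. -/
def KHo.str (x : KHo) : List KLetter := Subtype.val x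

/-- The preorder on `KH` given by the reflexive-transitive closure of the string
ordering (for the genuine string order this is just its reflexive closure). -/
instance : Preorder KHo where
  le := Relation.ReflTransGen (fun x y : KHo => KltH x.str y.str)
  lt := fun x y =>
    Relation.ReflTransGen (fun x y : KHo => KltH x.str y.str) x y ∧
      ¬ Relation.ReflTransGen (fun x y : KHo => KltH x.str y.str) y x
  le_refl := fun a => Relation.ReflTransGen.refl
  le_trans := fun a b c h h' => Relation.ReflTransGen.trans h h'
  lt_iff_le_not_ge := fun a b => Iff.rfl

/-- The interval `[c, d]` in the chain `KH`. -/
def KInterval (c d : KHo) : Type := {x : KHo // c ≤ x ∧ x ≤ d}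

instance (c d : KHo) : Preorder (KInterval c d) where
  le := fun a b => a.1 ≤ b.1
  lt := fun a b => a.1 ≤ b.1 ∧ ¬ b.1 ≤ a.1
  le_refl := fun a => le_refl (α := KHo) a.1
  le_trans := fun _ _ _ h h' => le_trans (α := KHo) h h'
  lt_iff_le_not_ge := fun a b => Iff.rfl

/-! Consecutive letters of a Kronecker string alternate between a direct and an inverse arrow
with distinct indices, so a string starting with `α` is a prefix of `(αβ⁻¹)^∞` and is
determined by its length. Two prefixes are compared by the letter of the longer one just after
the shorter one: `α` (even position) makes the longer one bigger, `β⁻¹` (odd position) smaller.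
Hence the prefixes of even length ascend like `ω`, those of odd length descend like `ω*`, and
`H ≅ ω + ω*`, as is every interval `[(αβ⁻¹)ᵐ, (αβ⁻¹)ⁿα]` around `(αβ⁻¹)^∞`. In `ω + ω*` the
intervals inside a summand are finite and those across are not, so the first congruence has the
two summands as classes, and the second one collapses everything: the m-dimension is `1`. -/

open Relation OrderDual

universe u

section MDimension

variable {P Q : Type*} [Preorder P] [Preorder Q]

lemma mdimCong_zero : mdimCong P 0 = (· = ·) := by
  rw [mdimCong, Ordinal.limitRecOn_zero]

lemma mdimCong_add_one (o : Ordinal) : mdimCong P (o + 1) = EqvGen (fun x y =>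
    mdimCong P o x y ∨ (x ≤ y ∧ FinLenBetween (mdimCong P o) x y) ∨
      (y ≤ x ∧ FinLenBetween (mdimCong P o) y x)) := by
  rw [mdimCong, Ordinal.limitRecOn_add_one]
  rfl

lemma mdimCong_of_isSuccLimit {o : Ordinal} (ho : Order.IsSuccLimit o) :
    mdimCong P o = fun x y => ∃ (o' : Ordinal) (_ : o' < o), mdimCong P o' x y := by
  rw [mdimCong, Ordinal.limitRecOn_limit _ _ _ _ ho]
  rfl

lemma mdimCong_one : mdimCong P 1 = EqvGen (fun x y =>
    x = y ∨ (x ≤ y ∧ FinLenBetween (· = ·) x y) ∨ (y ≤ x ∧ FinLenBetween (· = ·) y x)) := by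
  rw [← zero_add 1, mdimCong_add_one, mdimCong_zero]

lemma finLenBetween_of_finite_Icc (r : P → P → Prop) {x y : P} (h : (Set.Icc x y).Finite) :
    FinLenBetween r x y := by
  have := h.to_subtype
  refine ⟨Nat.card (Set.Icc x y), fun m f hf hxy _ => ?_⟩
  have hinj : Function.Injective (fun i => ⟨f i, hxy i⟩ : Fin (m + 1) → Set.Icc x y) :=
    fun i j hij => hf.injective (congrArg Subtype.val hij)
  have hcard := Nat.card_le_card_of_injective _ hinj
  rw [Nat.card_eq_fintype_card (α := Fin (m + 1)), Fintype.card_fin] at hcard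
  exact Nat.le_of_succ_le hcard

lemma not_finLenBetween_eq_of_strictMono {x y : P} {g : ℕ → P} (hg : StrictMono g)
    (hxy : ∀ i, x ≤ g i ∧ g i ≤ y) : ¬ FinLenBetween (· = ·) x y := by
  rintro ⟨n, hn⟩
  have := hn (n + 1) (fun i => g i) (hg.comp Fin.val_strictMono) (fun i => hxy i)
    (fun i => (hg (Nat.lt_succ_self i)).ne)
  omega

lemma FinLenBetween.map (e : P ≃o Q) {r : P → P → Prop} {s : Q → Q → Prop}
    (hrs : ∀ a b, r a b → s (e a) (e b)) {x y : P} (h : FinLenBetween r x y) :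
    FinLenBetween s (e x) (e y) := by
  obtain ⟨n, hn⟩ := h
  refine ⟨n, fun m f hf hxy hs => hn m (e.symm ∘ f) (e.symm.strictMono.comp hf)
    (fun i => ?_) (fun i hr => hs i (by simpa using hrs _ _ hr))⟩
  simpa [← e.le_symm_apply, ← e.symm_apply_le] using hxy i

lemma mdimCong_map (e : P ≃o Q) (o : Ordinal) {x y : P} (h : mdimCong P o x y) :
    mdimCong Q o (e x) (e y) := by
  induction o using Ordinal.limitRecOn generalizing x y with
  | zero => rw [mdimCong_zero] at h ⊢; rw [h]
  | add_one o ih =>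
    rw [mdimCong_add_one] at h ⊢
    induction h with
    | rel a b hab =>
      refine .rel _ _ ?_
      rcases hab with hab | ⟨hle, hf⟩ | ⟨hle, hf⟩
      · exact .inl (ih hab)
      · exact .inr (.inl ⟨e.monotone hle, hf.map e fun _ _ => ih⟩)
      · exact .inr (.inr ⟨e.monotone hle, hf.map e fun _ _ => ih⟩)
    | refl => exact .refl _
    | symm _ _ _ ih' => exact .symm _ _ ih'
    | trans _ _ _ _ _ ih₁ ih₂ => exact .trans _ _ _ ih₁ ih₂
  | limit o ho ih =>
    rw [mdimCong_of_isSuccLimit ho] at h ⊢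
    obtain ⟨o', ho', h⟩ := h
    exact ⟨o', ho', ih o' ho' h⟩

lemma MDimIs.of_orderIso (e : P ≃o Q) {d : Ordinal} (h : MDimIs Q d) : MDimIs P d := by
  refine ⟨fun x y => by simpa using mdimCong_map e.symm _ (h.1 (e x) (e y)), ?_⟩
  refine h.2.imp_right fun hQ hP => hQ fun x y => ?_
  simpa using mdimCong_map e d (hP (e.symm x) (e.symm y))

lemma MDimIs.one_le {d : Ordinal.{u}} (h₁ : MDimIs P (1 : Ordinal.{u})) (h : MDimIs P d) :
    1 ≤ d := by
  rw [Order.one_le_iff_pos, pos_iff_ne_zero]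
  rintro rfl
  exact h₁.2.resolve_left one_ne_zero (by simpa using h.1)

end MDimension

lemma Equiv.reflTransGen_iff_le {α β : Type*} [PartialOrder α] (e : α ≃ β) {r : β → β → Prop}
    (h : ∀ x y, x < y ↔ r (e x) (e y)) (x y : α) : ReflTransGen r (e x) (e y) ↔ x ≤ y := by
  constructor
  · suffices ∀ a b, ReflTransGen r a b → e.symm a ≤ e.symm b by simpa using this (e x) (e y)
    intro a b hab
    induction hab with
    | refl => exact le_rfl
    | tail _ hbc ih => exact ih.trans ((h _ _).2 (by simpa using hbc)).le
  · intro hxy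
    rcases hxy.lt_or_eq with hlt | rfl
    · exact .single ((h x y).1 hlt)
    · exact .refl

lemma List.eq_map_range_of_isChain {α : Type*} {R : α → α → Prop} {f : ℕ → α}
    (hf : ∀ i b, R (f i) b → b = f (i + 1)) {w : List α} (hw : w.IsChain R)
    (hhead : ∀ a ∈ w.head?, a = f 0) : w = (List.range w.length).map f := by
  induction w generalizing f with
  | nil => rfl
  | cons a t ih =>
    obtain rfl : a = f 0 := hhead a rfl
    have ht : t = (List.range t.length).map (f ∘ Nat.succ) := by
      refine ih (fun i b h => hf (i + 1) b h) hw.tail fun b hb => hf 0 b ?_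
      cases t with
      | nil => simp at hb
      | cons b' t' =>
        obtain rfl : b' = b := by simpa using hb
        exact (List.isChain_cons_cons.1 hw).1
    rw [List.length_cons, List.range_succ_eq_map, List.map_cons, List.map_map, ← ht]

namespace Sum.Lex

variable {α β : Type*}

lemma monotone_isRight [Preorder α] [Preorder β] :
    Monotone fun z : α ⊕ₗ β => (ofLex z).isRight := by
  intro x y
  induction x with | h x => ?_
  induction y with | h y => ?_
  rcases x with a | a <;> rcases y with b | b
  all_goals simp

lemma finite_Icc_inl [Preorder α] [Preorder β] [LocallyFiniteOrder α] (a b : α) :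
    (Set.Icc (toLex (inl a) : α ⊕ₗ β) (toLex (inl b))).Finite := by
  refine ((Set.finite_Icc a b).image fun c => (toLex (inl c) : α ⊕ₗ β)).subset ?_
  rintro (c | c) ⟨h₁, h₂⟩
  · exact ⟨c, ⟨inl_le_inl_iff.1 h₁, inl_le_inl_iff.1 h₂⟩, rfl⟩
  · exact absurd h₂ not_inr_le_inl

lemma finite_Icc_inr [Preorder α] [Preorder β] [LocallyFiniteOrder β] (a b : β) :
    (Set.Icc (toLex (inr a) : α ⊕ₗ β) (toLex (inr b))).Finite := by
  refine ((Set.finite_Icc a b).image fun c => (toLex (inr c) : α ⊕ₗ β)).subset ?_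
  rintro (c | c) ⟨h₁, h₂⟩
  · exact absurd h₁ not_inr_le_inl
  · exact ⟨c, ⟨inr_le_inr_iff.1 h₁, inr_le_inr_iff.1 h₂⟩, rfl⟩

end Sum.Lex

lemma finite_Icc_of_isRight_eq {x y : ℕ ⊕ₗ ℕᵒᵈ} (h : (ofLex x).isRight = (ofLex y).isRight) :
    (Set.Icc x y).Finite := by
  induction x with | h x => ?_
  induction y with | h y => ?_
  rcases x with a | a <;> rcases y with b | b
  · exact Sum.Lex.finite_Icc_inl a b
  · simp at h
  · simp at h
  · exact Sum.Lex.finite_Icc_inr a b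

lemma isRight_eq_of_finLenBetween_eq {x y : ℕ ⊕ₗ ℕᵒᵈ} (hxy : x ≤ y)
    (h : FinLenBetween (· = ·) x y) : (ofLex x).isRight = (ofLex y).isRight := by
  induction x with | h x => ?_
  induction y with | h y => ?_
  rcases x with a | a <;> rcases y with b | b
  · rfl
  · refine absurd h (not_finLenBetween_eq_of_strictMono (g := fun i => toLex (.inl (a + i)))
      (fun i j hij => Sum.Lex.inl_lt_inl_iff.2 (by omega)) fun i => ⟨?_, Sum.Lex.inl_le_inr _ _⟩)
    exact Sum.Lex.inl_le_inl_iff.2 (by omega)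
  · exact absurd hxy Sum.Lex.not_inr_le_inl
  · rfl

lemma mdimCong_one_iff_isRight_eq (x y : ℕ ⊕ₗ ℕᵒᵈ) :
    mdimCong (ℕ ⊕ₗ ℕᵒᵈ) 1 x y ↔ (ofLex x).isRight = (ofLex y).isRight := by
  rw [mdimCong_one]
  constructor
  · refine fun h => (Equivalence.eqvGen_iff (r := fun x y : ℕ ⊕ₗ ℕᵒᵈ =>
      (ofLex x).isRight = (ofLex y).isRight) ⟨fun _ => rfl, Eq.symm, Eq.trans⟩).1
      (EqvGen.mono (fun a b hab => ?_) x y h)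
    rcases hab with rfl | ⟨hab, hf⟩ | ⟨hba, hf⟩
    · rfl
    · exact isRight_eq_of_finLenBetween_eq hab hf
    · exact (isRight_eq_of_finLenBetween_eq hba hf).symm
  · intro h
    rcases le_total x y with hxy | hyx
    · exact .rel _ _ (.inr (.inl
        ⟨hxy, finLenBetween_of_finite_Icc _ (finite_Icc_of_isRight_eq h)⟩))
    · exact .symm _ _ (.rel _ _ (.inr (.inl
        ⟨hyx, finLenBetween_of_finite_Icc _ (finite_Icc_of_isRight_eq h.symm)⟩)))

/-- A monotone chain changes summand at most once. -/
lemma finLenBetween_mdimCong_one (x y : ℕ ⊕ₗ ℕᵒᵈ) :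
    FinLenBetween (mdimCong (ℕ ⊕ₗ ℕᵒᵈ) 1) x y := by
  refine ⟨1, fun m f hf _ hs => ?_⟩
  by_contra! hm
  have hstep (i : Fin m) : (ofLex (f i.castSucc)).isRight < (ofLex (f i.succ)).isRight :=
    (Sum.Lex.monotone_isRight (hf Fin.castSucc_lt_succ).le).lt_of_ne
      ((mdimCong_one_iff_isRight_eq _ _).not.1 (hs i))
  have no_bool_chain : ∀ a b c : Bool, a < b → b < c → False := by decide
  exact no_bool_chain _ _ _ (hstep ⟨0, by omega⟩) (hstep ⟨1, by omega⟩)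

lemma mdimIs_omegaPlusOmegaStar : MDimIs (ℕ ⊕ₗ ℕᵒᵈ) 1 := by
  refine ⟨fun x y => ?_, .inr fun h => ?_⟩
  · rw [mdimCong_add_one]
    rcases le_total x y with hxy | hyx
    · exact .rel _ _ (.inr (.inl ⟨hxy, finLenBetween_mdimCong_one x y⟩))
    · exact .rel _ _ (.inr (.inr ⟨hyx, finLenBetween_mdimCong_one y x⟩))
  · have := (mdimCong_one_iff_isRight_eq _ _).1 (h (toLex (.inl 0)) (toLex (.inr (toDual 0))))
    simp at this

def intervalShift (m n : ℕ) (z : ℕ ⊕ₗ ℕᵒᵈ) : ℕ ⊕ₗ ℕᵒᵈ :=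
  toLex ((ofLex z).map (m + ·) fun j => toDual (n + ofDual j))

lemma strictMono_intervalShift (m n : ℕ) : StrictMono (intervalShift m n) := by
  intro x y
  induction x with | h x => ?_
  induction y with | h y => ?_
  rcases x with a | a <;> rcases y with b | b <;> simp [intervalShift]

lemma range_intervalShift (m n : ℕ) :
    Set.range (intervalShift m n) = Set.Icc (toLex (.inl m)) (toLex (.inr (toDual n))) := by
  apply Set.Subset.antisymm
  · rintro _ ⟨z, rfl⟩
    induction z with | h z => ?_
    rcases z with a | a
    · simp [intervalShift]
    · exact ⟨Sum.Lex.inl_le_inr _ _, Sum.Lex.inr_le_inr_iff.2 (toDual_le_toDual.2 (by simp))⟩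
  · intro z ⟨h₁, h₂⟩
    induction z with | h z => ?_
    rcases z with c | c
    · refine ⟨toLex (.inl (c - m)), ?_⟩
      simp_all [intervalShift]
    · obtain ⟨c, rfl⟩ := toDual.surjective c
      have hc : n ≤ c := by simpa using h₂
      exact ⟨toLex (.inr (toDual (c - n))), by
        simp only [intervalShift, ofLex_toLex, Sum.map_inr, ofDual_toDual, Nat.add_sub_cancel' hc]⟩

lemma kInf_of_even {i : ℕ} (h : i % 2 = 0) : kInf i = .inl 0 := by simp [kInf, h]

lemma kInf_of_odd {i : ℕ} (h : i % 2 = 1) : kInf i = .inr 1 := by simp [kInf, h]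

lemma kInf_ne_inl_of_odd {i : ℕ} (h : i % 2 = 1) (a : Fin 2) : kInf i ≠ .inl a := by
  simp [kInf_of_odd h]

lemma kInf_ne_inr_of_even {i : ℕ} (h : i % 2 = 0) (b : Fin 2) : kInf i ≠ .inr b := by
  simp [kInf_of_even h]

lemma kAdj_kInf_iff (i : ℕ) (b : KLetter) : KAdj (kInf i) b ↔ b = kInf (i + 1) := by
  rcases Nat.mod_two_eq_zero_or_one i with h | h
  · rw [kInf_of_even h, kInf_of_odd (by omega)]
    rcases b with a | a <;> fin_cases a <;> simp [KAdj]
  · rw [kInf_of_odd h, kInf_of_even (by omega)]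
    rcases b with a | a <;> fin_cases a <;> simp [KAdj]

def kInfPrefix (p : ℕ) : List KLetter := (List.range p).map kInf

@[simp]
lemma length_kInfPrefix (p : ℕ) : (kInfPrefix p).length = p := by simp [kInfPrefix]

@[simp]
lemma get_kInfPrefix (p i : ℕ) (h : i < (kInfPrefix p).length) :
    (kInfPrefix p).get ⟨i, h⟩ = kInf i := by
  simp [kInfPrefix]

lemma kInfPrefix_add (p k : ℕ) :
    kInfPrefix (p + k) = kInfPrefix p ++ (List.range k).map (kInf ∘ (p + ·)) := by
  simp [kInfPrefix, List.range_add]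

lemma kInfPrefix_mem_KH (p : ℕ) : kInfPrefix p ∈ KH := by
  refine ⟨?_, ?_⟩
  · show (kInfPrefix p).IsChain KAdj
    rw [kInfPrefix, List.isChain_map, List.isChain_range]
    exact fun i _ => (kAdj_kInf_iff i _).2 rfl
  · cases p with
    | zero => exact .inl rfl
    | succ p => exact .inr (by simp [kInfPrefix, List.range_succ_eq_map, kInf])

lemma eq_kInfPrefix_of_mem_KH {w : List KLetter} (hw : w ∈ KH) : w = kInfPrefix w.length := by
  refine List.eq_map_range_of_isChain (fun i b => (kAdj_kInf_iff i b).1) hw.1 fun a ha => ?_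
  rcases hw.2 with rfl | h
  · simp at ha
  · simpa [h, kInf] using ha.symm

lemma kpow_eq_kInfPrefix (n : ℕ) : kpow n = kInfPrefix (2 * n) := by
  induction n with
  | zero => rfl
  | succ n ih =>
    rw [kpow, List.replicate_succ', List.flatten_append, ← kpow, ih, mul_add, mul_one,
      kInfPrefix_add]
    simp [List.range_succ, kInf]

lemma kpowa_eq_kInfPrefix (n : ℕ) : kpowa n = kInfPrefix (2 * n + 1) := by
  rw [kpowa, kpow_eq_kInfPrefix, kInfPrefix_add]
  simp [kInf]

lemma kInfPrefix_eq_append_cons {p q : ℕ} (h : p < q) :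
    ∃ t, kInfPrefix q = kInfPrefix p ++ kInf p :: t := by
  obtain ⟨k, rfl⟩ := Nat.exists_eq_add_of_lt h
  refine ⟨(List.range k).map (kInf ∘ (p + ·) ∘ Nat.succ), ?_⟩
  rw [add_assoc, kInfPrefix_add, List.range_succ_eq_map]
  simp

lemma eq_kInf_of_kInfPrefix_eq_append_cons {p : ℕ} {e t : List KLetter} {x : KLetter}
    (h : kInfPrefix p = e ++ x :: t) : e.length < p ∧ x = kInf e.length := by
  have := congrArg (·[e.length]?) h
  simp only [kInfPrefix, List.getElem?_map, List.getElem?_append_right le_rfl, Nat.sub_self,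
    List.getElem?_cons_zero, Option.map_eq_some_iff, List.getElem?_eq_some_iff] at this
  obtain ⟨_, ⟨hlt, rfl⟩, rfl⟩ := this
  simpa using hlt

lemma kltH_kInfPrefix_iff (p q : ℕ) :
    KltH (kInfPrefix p) (kInfPrefix q) ↔ p < q ∧ p % 2 = 0 ∨ q < p ∧ q % 2 = 1 := by
  constructor
  · rintro (⟨a, d', hd⟩ | ⟨b, c', hc⟩ | ⟨e, b, a, c', d', hc, hd⟩)
    · obtain ⟨hpq, ha⟩ := eq_kInf_of_kInfPrefix_eq_append_cons hd
      simp only [length_kInfPrefix] at hpq ha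
      refine .inl ⟨hpq, ?_⟩
      by_contra hp
      exact kInf_ne_inl_of_odd (by omega) a ha.symm
    · obtain ⟨hqp, hb⟩ := eq_kInf_of_kInfPrefix_eq_append_cons hc
      simp only [length_kInfPrefix] at hqp hb
      refine .inr ⟨hqp, ?_⟩
      by_contra hq
      exact kInf_ne_inr_of_even (by omega) b hb.symm
    · have hb := (eq_kInf_of_kInfPrefix_eq_append_cons hc).2
      have ha := (eq_kInf_of_kInfPrefix_eq_append_cons hd).2
      exact absurd (ha.trans hb.symm) Sum.inl_ne_inr
  · rintro (⟨hpq, hp⟩ | ⟨hqp, hq⟩)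
    · obtain ⟨t, ht⟩ := kInfPrefix_eq_append_cons hpq
      exact .inl ⟨0, t, by rwa [kInf_of_even hp] at ht⟩
    · obtain ⟨t, ht⟩ := kInfPrefix_eq_append_cons hqp
      exact .inr (.inl ⟨1, t, by rwa [kInf_of_odd hq] at ht⟩)

lemma kltFI_kInfPrefix_iff (p : ℕ) : KltFI (kInfPrefix p) kInf ↔ p % 2 = 0 := by
  constructor
  · rintro (⟨-, a, ha⟩ | ⟨j, hj, -, ⟨b, hb⟩, a, ha⟩)
    · rw [length_kInfPrefix] at ha
      by_contra hp
      exact kInf_ne_inl_of_odd (by omega) a ha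
    · rw [get_kInfPrefix] at hb
      exact absurd (ha.symm.trans hb) Sum.inl_ne_inr
  · intro hp
    exact .inl ⟨fun i hi => get_kInfPrefix p i hi, 0, by rw [length_kInfPrefix, kInf_of_even hp]⟩

lemma kltIF_kInfPrefix_iff (p : ℕ) : KltIF kInf (kInfPrefix p) ↔ p % 2 = 1 := by
  constructor
  · rintro (⟨-, b, hb⟩ | ⟨j, hj, -, ⟨a, ha⟩, b, hb⟩)
    · rw [length_kInfPrefix] at hb
      by_contra hp
      exact kInf_ne_inr_of_even (by omega) b hb
    · rw [get_kInfPrefix] at ha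
      exact absurd (ha.symm.trans hb) Sum.inl_ne_inr
  · intro hp
    exact .inl ⟨fun i hi => get_kInfPrefix p i hi, 1, by rw [length_kInfPrefix, kInf_of_odd hp]⟩

/-- The length of the string of `H` that corresponds to a point of `ω + ω*`. -/
def kLength : ℕ ⊕ₗ ℕᵒᵈ ≃ ℕ :=
  ofLex.trans (((Equiv.refl ℕ).sumCongr ofDual).trans Equiv.natSumNatEquivNat)

@[simp]
lemma kLength_inl (n : ℕ) : kLength (toLex (.inl n)) = 2 * n := by
  simp [kLength, Equiv.natSumNatEquivNat_apply]

@[simp]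
lemma kLength_inr (n : ℕ) : kLength (toLex (.inr (toDual n))) = 2 * n + 1 := by
  simp [kLength, Equiv.natSumNatEquivNat_apply]

lemma lt_iff_kltH_kInfPrefix_kLength (x y : ℕ ⊕ₗ ℕᵒᵈ) :
    x < y ↔ KltH (kInfPrefix (kLength x)) (kInfPrefix (kLength y)) := by
  rw [kltH_kInfPrefix_iff]
  induction x with | h x => ?_
  induction y with | h y => ?_
  rcases x with a | a <;> rcases y with b | b
  · simp
  · obtain ⟨b, rfl⟩ := toDual.surjective b
    simp
    omega
  · obtain ⟨a, rfl⟩ := toDual.surjective a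
    simp
  · obtain ⟨a, rfl⟩ := toDual.surjective a
    obtain ⟨b, rfl⟩ := toDual.surjective b
    simp

def kInfPrefixEquiv : ℕ ≃ KHo where
  toFun p := ⟨kInfPrefix p, kInfPrefix_mem_KH p⟩
  invFun x := x.str.length
  left_inv := length_kInfPrefix
  right_inv x := Subtype.ext (eq_kInfPrefix_of_mem_KH x.2).symm

def kIso : (ℕ ⊕ₗ ℕᵒᵈ) ≃o KHo where
  toEquiv := kLength.trans kInfPrefixEquiv
  map_rel_iff' := (Equiv.reflTransGen_iff_le _ lt_iff_kltH_kInfPrefix_kLength _ _)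

lemma str_kIso (z : ℕ ⊕ₗ ℕᵒᵈ) : (kIso z).str = kInfPrefix (kLength z) := rfl

lemma str_kIso_inl (n : ℕ) : (kIso (toLex (.inl n))).str = kpow n := by
  rw [str_kIso, kLength_inl, kpow_eq_kInfPrefix]

lemma str_kIso_inr (n : ℕ) : (kIso (toLex (.inr (toDual n)))).str = kpowa n := by
  rw [str_kIso, kLength_inr, kpowa_eq_kInfPrefix]

lemma lt_iff_kltH_str_kIso (x y : ℕ ⊕ₗ ℕᵒᵈ) : x < y ↔ KltH (kIso x).str (kIso y).str :=
  lt_iff_kltH_kInfPrefix_kLength x y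

lemma kltFI_str_kIso_iff (z : ℕ ⊕ₗ ℕᵒᵈ) :
    KltFI (kIso z).str kInf ↔ ∃ m, z = toLex (.inl m) := by
  rw [str_kIso, kltFI_kInfPrefix_iff]
  induction z with | h z => ?_
  rcases z with a | a
  · simp
  · obtain ⟨a, rfl⟩ := toDual.surjective a
    simp

lemma kltIF_str_kIso_iff (z : ℕ ⊕ₗ ℕᵒᵈ) :
    KltIF kInf (kIso z).str ↔ ∃ n, z = toLex (.inr (toDual n)) := by
  rw [str_kIso, kltIF_kInfPrefix_iff]
  induction z with | h z => ?_
  rcases z with a | a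
  · simp
  · obtain ⟨a, rfl⟩ := toDual.surjective a
    simp

lemma KH_eq : KH = {w | ∃ n, w = kpow n} ∪ {w | ∃ n, w = kpowa n} := by
  ext w
  constructor
  · intro hw
    obtain ⟨z, hz⟩ := kIso.surjective ⟨w, hw⟩
    induction z with | h z => ?_
    rcases z with n | n
    · exact .inl ⟨n, by rw [← str_kIso_inl, hz]; rfl⟩
    · exact .inr ⟨ofDual n, by rw [← str_kIso_inr, toDual_ofDual, hz]; rfl⟩
  · rintro (⟨n, rfl⟩ | ⟨n, rfl⟩)
    · exact str_kIso_inl n ▸ (kIso _).2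
    · exact str_kIso_inr n ▸ (kIso _).2

noncomputable def kIntervalIso (m n : ℕ) :
    (ℕ ⊕ₗ ℕᵒᵈ) ≃o KInterval (kIso (toLex (.inl m))) (kIso (toLex (.inr (toDual n)))) := by
  refine StrictMono.orderIsoOfSurjective
    (fun z => ⟨kIso (intervalShift m n z), ?_⟩) ?_ ?_
  · obtain ⟨h₁, h₂⟩ : intervalShift m n z ∈ Set.Icc _ _ :=
      range_intervalShift m n ▸ Set.mem_range_self z
    exact ⟨kIso.monotone h₁, kIso.monotone h₂⟩
  · exact fun a b h => kIso.strictMono (strictMono_intervalShift m n h)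
  · rintro ⟨x, hx₁, hx₂⟩
    obtain ⟨z, hz⟩ : kIso.symm x ∈ Set.range (intervalShift m n) := by
      rw [range_intervalShift]
      exact ⟨kIso.le_symm_apply.2 hx₁, kIso.symm_apply_le.2 hx₂⟩
    exact ⟨z, Subtype.ext (by simp [hz])⟩

lemma mdimIs_kInterval (m n : ℕ) :
    MDimIs (KInterval (kIso (toLex (.inl m))) (kIso (toLex (.inr (toDual n))))) 1 :=
  mdimIs_omegaPlusOmegaStar.of_orderIso (kIntervalIso m n).symm

/-- Over the Kronecker algebra, the chain `H` of finite strings beginning with `α`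
(together with the empty string) consists exactly of the strings `(αβ⁻¹)ⁿ` and
`(αβ⁻¹)ⁿα`; it has order type `ω + ω*`, with the `(αβ⁻¹)ⁿ` forming the ascending
`ω`-part and the `(αβ⁻¹)ᵐα` the descending `ω*`-part above it; the infinite string
`(αβ⁻¹)^∞` sits between the two parts; `H` has m-dimension `1`; and the string
`(αβ⁻¹)^∞` has m-dimension `1` (the minimum of the m-dimensions of the intervals
`[c, d]` of `H` with `c < (αβ⁻¹)^∞ < d`). -/
theorem kronecker_H_omega_plus_omegaStar :
    (KH = {w | ∃ n, w = kpow n} ∪ {w | ∃ n, w = kpowa n}) ∧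
    (∀ m n : ℕ, m < n → KltH (kpow m) (kpow n)) ∧
    (∀ m n : ℕ, m < n → KltH (kpowa n) (kpowa m)) ∧
    (∀ m n : ℕ, KltH (kpow m) (kpowa n)) ∧
    (∃ e : (ℕ ⊕ₗ ℕᵒᵈ) ≃ KHo,
      (∀ x y : ℕ ⊕ₗ ℕᵒᵈ, x < y ↔ KltH (e x).str (e y).str) ∧
      (∀ n : ℕ, (e (toLex (Sum.inl n))).str = kpow n) ∧
      (∀ n : ℕ, (e (toLex (Sum.inr (OrderDual.toDual n)))).str = kpowa n)) ∧
    (∀ n : ℕ, KltFI (kpow n) kInf) ∧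
    (∀ n : ℕ, KltIF kInf (kpowa n)) ∧
    MDimIs KHo 1 ∧
    ((∃ c d : KHo, KltFI c.str kInf ∧ KltIF kInf d.str ∧ MDimIs (KInterval c d) 1) ∧
      (∀ (c d : KHo) (e : Ordinal), KltFI c.str kInf → KltIF kInf d.str →
        MDimIs (KInterval c d) e → 1 ≤ e)) := by
  refine ⟨KH_eq, fun m n h => ?_, fun m n h => ?_, fun m n => ?_,
    ⟨kIso.toEquiv, lt_iff_kltH_str_kIso, str_kIso_inl, str_kIso_inr⟩,
    fun n => ?_, fun n => ?_, mdimIs_omegaPlusOmegaStar.of_orderIso kIso.symm,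
    ⟨_, _, (kltFI_str_kIso_iff _).2 ⟨0, rfl⟩, (kltIF_str_kIso_iff _).2 ⟨0, rfl⟩,
      mdimIs_kInterval 0 0⟩, fun c d e hc hd he => ?_⟩
  · rw [← str_kIso_inl, ← str_kIso_inl, ← lt_iff_kltH_str_kIso]
    exact Sum.Lex.inl_lt_inl_iff.2 h
  · rw [← str_kIso_inr, ← str_kIso_inr, ← lt_iff_kltH_str_kIso]
    exact Sum.Lex.inr_lt_inr_iff.2 (toDual_lt_toDual.2 h)
  · rw [← str_kIso_inl, ← str_kIso_inr, ← lt_iff_kltH_str_kIso]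
    exact Sum.Lex.inl_lt_inr _ _
  · exact str_kIso_inl n ▸ (kltFI_str_kIso_iff _).2 ⟨n, rfl⟩
  · exact str_kIso_inr n ▸ (kltIF_str_kIso_iff _).2 ⟨n, rfl⟩
  · obtain ⟨m, hm⟩ := (kltFI_str_kIso_iff (kIso.symm c)).1 (by simpa using hc)
    obtain ⟨n, hn⟩ := (kltIF_str_kIso_iff (kIso.symm d)).1 (by simpa using hd)
    rw [kIso.symm_apply_eq] at hm hn
    subst hm hn
    exact (mdimIs_kInterval m n).one_le he
end
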